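/- arXiv:1408.3935 — 2 statements merged into one kernel-verified Lean document; each statement's English description precedes it below -/
import Mathlib

section
/- Let G be a K_5-minor-free graph with at least one edge such that every edge of G is contained in some triangle of G. Then G has a 3-clique-coloring in which, moreover, no triangle of G is monochromatic. -/
open SimpleGraph

/-- `H` is a minor of `G`: there is a family of pairwise disjoint nonempty connected
branch sets in `G`, one for each vertex of `H`, with an edge of `G` between the branch
sets of any two adjacent vertices of `H`. -/
def SimpleGraph.HasMinor {V W : Type*} (G : SimpleGraph V) (H : SimpleGraph W) : Prop :=
  ∃ f : W → Set V,
    (∀ w, (f w).Nonempty) ∧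
    (∀ w, (G.induce (f w)).Connected) ∧
    (∀ w₁ w₂, w₁ ≠ w₂ → Disjoint (f w₁) (f w₂)) ∧
    (∀ w₁ w₂, H.Adj w₁ w₂ → ∃ v₁ ∈ f w₁, ∃ v₂ ∈ f w₂, G.Adj v₁ v₂)

/-- `G` contains no induced subgraph isomorphic to the claw `K_{1,3}`. -/
def SimpleGraph.ClawFree {V : Type*} (G : SimpleGraph V) : Prop :=
  IsEmpty (completeBipartiteGraph (Fin 1) (Fin 3) ↪g G)

/-- `s` is a maximal clique of `G`. -/
def SimpleGraph.IsMaxClique {V : Type*} (G : SimpleGraph V) (s : Set V) : Prop :=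
  G.IsClique s ∧ ∀ t : Set V, G.IsClique t → s ⊆ t → s = t

/-- `c` is a clique-coloring of `G`: no maximal clique with at least two vertices
is monochromatic. -/
def SimpleGraph.IsCliqueColoring {V : Type*} (G : SimpleGraph V) {k : ℕ} (c : V → Fin k) : Prop :=
  ∀ s : Set V, G.IsMaxClique s → s.Nontrivial → ∃ u ∈ s, ∃ v ∈ s, c u ≠ c v

/-- `G` is `k`-clique-colorable. -/
def SimpleGraph.CliqueColorable {V : Type*} (G : SimpleGraph V) (k : ℕ) : Prop :=
  ∃ c : V → Fin k, G.IsCliqueColoring c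

/-- `G` is an odd cycle, i.e. isomorphic to `C_n` for some odd `n ≥ 3`. -/
def SimpleGraph.IsOddCycle {V : Type*} (G : SimpleGraph V) : Prop :=
  ∃ n : ℕ, 3 ≤ n ∧ Odd n ∧ Nonempty (G ≃g cycleGraph n)

/-- `D` meets every (nonempty) maximal clique of `G`. -/
def SimpleGraph.IsCliqueTransversal {V : Type*} (G : SimpleGraph V) (D : Set V) : Prop :=
  ∀ s : Set V, G.IsMaxClique s → s.Nonempty → (D ∩ s).Nonempty

/-- `G` is `H`-minor-free, but adding any edge between two distinct nonadjacent
vertices creates an `H` minor. -/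
def SimpleGraph.EdgeMaximalMinorFree {V W : Type*} (G : SimpleGraph V) (H : SimpleGraph W) : Prop :=
  ¬ G.HasMinor H ∧ ∀ u v : V, u ≠ v → ¬ G.Adj u v →
    (G ⊔ fromEdgeSet {s(u, v)}).HasMinor H

/-!
Mader's argument bounds the number of edges of a graph without a `K_{k+1}` minor. In a minimal
graph on `n ≥ k + 1` vertices with more than `(k - 1) n - C(k, 2)` edges, deleting an edge, deleting
a vertex of degree at most `k - 1`, or contracting an edge lying in at most `k - 2` triangles would
keep the edge bound. Hence every vertex has degree at least `k`, every edge lies in at least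
`k - 1` triangles, and the edge count sits exactly at the threshold, which forces a vertex `v` of
degree at most `2k - 3`. The neighbourhood of `v` has minimum degree at least `k - 1`; a `K_k` minor
there, coned off by `v`, is a `K_{k+1}` minor. For `k = 3` and `k = 4` the neighbourhood case is
elementary, so a `K₅`-minor-free graph has fewer than `3n - 5` edges and a vertex of degree at
most 5.

Deleting such a vertex, colouring the rest with 3 colours without monochromatic triangles and
giving the vertex a colour that occurs at most once among its at most 5 neighbours colours `G`
without monochromatic triangles. If every edge lies in a triangle, every maximal clique with two vertices contains
a triangle, so the colouring is also a clique-colouring.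
-/

theorem Nat.add_one_choose_two_add_choose_two {k : ℕ} (hk : 1 ≤ k) :
    (k + 1).choose 2 + k.choose 2 = (k - 1) * (k + 1) + 1 := by
  obtain ⟨j, rfl⟩ : ∃ j, k = j + 1 := ⟨k - 1, by omega⟩
  have h := Nat.add_one_mul_choose_eq j 1
  have h' := Nat.add_one_mul_choose_eq (j + 1) 1
  simp only [Nat.choose_one_right, Nat.add_sub_cancel] at h h' ⊢
  nlinarith

namespace SimpleGraph

open Finset

universe u v w

variable {V : Type u} {W : Type v} {X : Type w} {G : SimpleGraph V} {H : SimpleGraph W}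
  {K : SimpleGraph X}

theorem connected_induce_singleton (G : SimpleGraph V) (v : V) : (G.induce {v}).Connected :=
  have : Nonempty ({v} : Set V) := ⟨⟨v, rfl⟩⟩
  .of_subsingleton

theorem connected_induce_biUnion {S : Set W} {f : W → Set V} (hS : (H.induce S).Connected)
    (hf : ∀ w ∈ S, (G.induce (f w)).Connected)
    (hadj : ∀ w₁ ∈ S, ∀ w₂ ∈ S, H.Adj w₁ w₂ → ∃ v₁ ∈ f w₁, ∃ v₂ ∈ f w₂, G.Adj v₁ v₂) :
    (G.induce (⋃ w ∈ S, f w)).Connected := by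
  set U := ⋃ w ∈ S, f w
  have hsub : ∀ w ∈ S, f w ⊆ U := fun w hw => Set.subset_biUnion_of_mem hw
  have inside : ∀ w (hw : w ∈ S) (a b : V) (ha : a ∈ f w) (hb : b ∈ f w),
      (G.induce U).Reachable ⟨a, hsub w hw ha⟩ ⟨b, hsub w hw hb⟩ := fun w hw a b ha hb =>
    ((hf w hw).preconnected ⟨a, ha⟩ ⟨b, hb⟩).map (induceHomOfLE G (hsub w hw)).toHom
  obtain ⟨⟨w₀, hw₀⟩⟩ := hS.nonempty
  obtain ⟨⟨u, hu⟩⟩ := (hf w₀ hw₀).nonempty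
  have key : ∀ w : S, ∀ v (hv : v ∈ f w),
      (G.induce U).Reachable ⟨u, hsub w₀ hw₀ hu⟩ ⟨v, hsub w w.2 hv⟩ := by
    intro w
    induction (reachable_iff_reflTransGen _ _).mp (hS.preconnected ⟨w₀, hw₀⟩ w) with
    | refl => exact fun v hv => inside w₀ hw₀ u v hu hv
    | @tail a b _ hab ih =>
      obtain ⟨v₁, hv₁, v₂, hv₂, hv⟩ := hadj a a.2 b b.2 hab
      refine fun v hv' => ((ih v₁ hv₁).trans ?_).trans (inside b b.2 v₂ v hv₂ hv')
      exact Adj.reachable (G := G.induce U) hv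
  rw [connected_iff_exists_forall_reachable]
  refine ⟨⟨u, hsub w₀ hw₀ hu⟩, fun ⟨v, hv⟩ => ?_⟩
  obtain ⟨w, hw, hvw⟩ := Set.mem_iUnion₂.mp hv
  exact key ⟨w, hw⟩ v hvw

theorem connected_induce_image_val {s : Set V} {t : Set s}
    (h : ((G.induce s).induce t).Connected) : (G.induce (Subtype.val '' t)).Connected := by
  have := connected_induce_biUnion (G := G) (f := fun w : s => {w.1}) h
    (fun _ _ => connected_induce_singleton G _) fun _ _ _ _ hw => ⟨_, rfl, _, rfl, hw⟩
  rwa [← Set.image_eq_iUnion] at this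

theorem HasMinor.trans (h₁ : G.HasMinor H) (h₂ : H.HasMinor K) : G.HasMinor K := by
  obtain ⟨f, hfne, hfconn, hfdisj, hfadj⟩ := h₁
  obtain ⟨g, hgne, hgconn, hgdisj, hgadj⟩ := h₂
  refine ⟨fun x => ⋃ w ∈ g x, f w, fun x => ?_, fun x => ?_, fun x₁ x₂ hx => ?_,
    fun x₁ x₂ hx => ?_⟩
  · obtain ⟨w, hw⟩ := hgne x
    obtain ⟨v, hv⟩ := hfne w
    exact ⟨v, Set.mem_biUnion hw hv⟩
  · exact connected_induce_biUnion (hgconn x) (fun w _ => hfconn w)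
      (fun w₁ _ w₂ _ hw => hfadj w₁ w₂ hw)
  · refine Set.disjoint_iUnion₂_left.mpr fun w₁ hw₁ =>
      Set.disjoint_iUnion₂_right.mpr fun w₂ hw₂ => hfdisj w₁ w₂ ?_
    rintro rfl
    exact Set.disjoint_left.mp (hgdisj x₁ x₂ hx) hw₁ hw₂
  · obtain ⟨w₁, hw₁, w₂, hw₂, hw⟩ := hgadj x₁ x₂ hx
    obtain ⟨v₁, hv₁, v₂, hv₂, hv⟩ := hfadj w₁ w₂ hw
    exact ⟨v₁, Set.mem_biUnion hw₁ hv₁, v₂, Set.mem_biUnion hw₂ hv₂, hv⟩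

theorem IsContained.hasMinor (h : H ⊑ G) : G.HasMinor H := by
  obtain ⟨f⟩ := h
  refine ⟨fun w => {f w}, fun w => Set.singleton_nonempty _,
    fun w => connected_induce_singleton G _, fun w₁ w₂ hw => ?_,
    fun w₁ w₂ hw => ⟨f w₁, rfl, f w₂, rfl, f.toHom.map_adj hw⟩⟩
  simpa using f.injective.ne hw

theorem hasMinor_top_of_eq_top [Fintype V] {n : ℕ} (hG : G = ⊤) (hn : Fintype.card V = n) :
    G.HasMinor (⊤ : SimpleGraph (Fin n)) :=
  hG ▸ (isContained_top_iff.mpr ⟨(Fintype.equivFinOfCardEq hn).symm.toEmbedding⟩).hasMinor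

theorem hasMinor_top_succ_of_subset_neighborSet {s : Set V} {v : V} {n : ℕ}
    (hs : s ⊆ G.neighborSet v) (h : (G.induce s).HasMinor (⊤ : SimpleGraph (Fin n))) :
    G.HasMinor (⊤ : SimpleGraph (Fin (n + 1))) := by
  obtain ⟨f, hne, hconn, hdisj, hadj⟩ := h
  have hv : ∀ i, v ∉ Subtype.val '' f i := fun i ⟨u, _, hu⟩ => (hs u.2).ne hu.symm
  refine ⟨Fin.cons {v} fun i => Subtype.val '' f i, fun i => ?_, fun i => ?_, fun i j hij => ?_,
    fun i j hij => ?_⟩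
  · cases i using Fin.cases
    · exact Set.singleton_nonempty v
    · exact (hne _).image _
  · cases i using Fin.cases
    · exact connected_induce_singleton G v
    · exact connected_induce_image_val (hconn _)
  · cases i using Fin.cases <;> cases j using Fin.cases
    · exact absurd rfl hij
    · exact Set.disjoint_singleton_left.mpr (hv _)
    · exact Set.disjoint_singleton_right.mpr (hv _)
    · exact (Set.disjoint_image_iff Subtype.val_injective).mpr
        (hdisj _ _ fun h => hij (congrArg Fin.succ h))
  · cases i using Fin.cases <;> cases j using Fin.cases
    · exact absurd rfl hij.ne
    · obtain ⟨u, hu⟩ := hne _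
      exact ⟨v, rfl, u, ⟨u, hu, rfl⟩, hs u.2⟩
    · obtain ⟨u, hu⟩ := hne _
      exact ⟨u, ⟨u, hu, rfl⟩, v, rfl, (hs u.2).symm⟩
    · obtain ⟨a, ha, b, hb, hab⟩ := hadj _ _ fun h => hij.ne (congrArg Fin.succ h)
      exact ⟨a, ⟨a, ha, rfl⟩, b, ⟨b, hb, rfl⟩, hab⟩

def contract (G : SimpleGraph V) (φ : V → W) : SimpleGraph W :=
  fromRel fun a b => ∃ u v, G.Adj u v ∧ φ u = a ∧ φ v = b

theorem contract_adj_of_adj {φ : V → W} {u v : V} (h : G.Adj u v) (hne : φ u ≠ φ v) :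
    (G.contract φ).Adj (φ u) (φ v) :=
  (fromRel_adj ..).mpr ⟨hne, .inl ⟨u, v, h, rfl, rfl⟩⟩

theorem hasMinor_contract {φ : V → W} (hφ : Function.Surjective φ)
    (hconn : ∀ w, (G.induce (φ ⁻¹' {w})).Connected) : G.HasMinor (G.contract φ) := by
  refine ⟨fun w => φ ⁻¹' {w}, fun w => ?_, hconn, fun w₁ w₂ hw => ?_, fun w₁ w₂ hw => ?_⟩
  · obtain ⟨v, rfl⟩ := hφ w
    exact ⟨v, rfl⟩
  · exact (Set.disjoint_singleton.mpr hw).preimage φ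
  · obtain ⟨-, ⟨u, v, huv, rfl, rfl⟩ | ⟨u, v, huv, rfl, rfl⟩⟩ := (fromRel_adj ..).mp hw
    · exact ⟨u, rfl, v, rfl, huv⟩
    · exact ⟨v, rfl, u, rfl, huv.symm⟩

section ContractEdge

variable [DecidableEq V] {x y : V}

def mergeInto (hxy : x ≠ y) (v : V) : ({y}ᶜ : Set V) :=
  if h : v = y then ⟨x, hxy⟩ else ⟨v, h⟩

@[simp]
theorem mergeInto_self (hxy : x ≠ y) : mergeInto hxy y = ⟨x, hxy⟩ := dif_pos rfl

theorem mergeInto_of_ne (hxy : x ≠ y) {v : V} (hv : v ≠ y) : mergeInto hxy v = ⟨v, hv⟩ :=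
  dif_neg hv

@[simp]
theorem mergeInto_val (hxy : x ≠ y) (v : ({y}ᶜ : Set V)) : mergeInto hxy v = v :=
  mergeInto_of_ne hxy v.2

theorem mergeInto_surjective (hxy : x ≠ y) : Function.Surjective (mergeInto hxy) :=
  fun v => ⟨v, mergeInto_val hxy v⟩

theorem mergeInto_preimage_self (hxy : x ≠ y) : mergeInto hxy ⁻¹' {⟨x, hxy⟩} = {x, y} := by
  ext v
  by_cases hv : v = y
  · simp [hv]
  · simp [mergeInto_of_ne hxy hv, Subtype.ext_iff, hv]

theorem mergeInto_preimage_of_ne (hxy : x ≠ y) {w : ({y}ᶜ : Set V)} (hw : w.1 ≠ x) :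
    mergeInto hxy ⁻¹' {w} = {w.1} := by
  ext v
  by_cases hv : v = y
  · subst hv
    simp [Subtype.ext_iff, Ne.symm hw, Ne.symm w.2]
  · simp [mergeInto_of_ne hxy hv, Subtype.ext_iff]

abbrev contractEdge (G : SimpleGraph V) (hxy : x ≠ y) : SimpleGraph ({y}ᶜ : Set V) :=
  G.contract (mergeInto hxy)

theorem Adj.hasMinor_contractEdge (h : G.Adj x y) : G.HasMinor (G.contractEdge h.ne) := by
  refine hasMinor_contract (mergeInto_surjective h.ne) fun w => ?_
  by_cases hw : w.1 = x
  · obtain rfl : w = ⟨x, h.ne⟩ := Subtype.ext hw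
    rw [mergeInto_preimage_self]
    exact induce_pair_connected_of_adj h
  · rw [mergeInto_preimage_of_ne h.ne hw]
    exact connected_induce_singleton G _

theorem induce_compl_singleton_le_contractEdge (hxy : x ≠ y) :
    G.induce {y}ᶜ ≤ G.contractEdge hxy := fun a b hab => by
  simpa using contract_adj_of_adj (φ := mergeInto hxy) hab (by simpa using hab.ne)

end ContractEdge

theorem degree_induce_finset [DecidableRel G.Adj] (s : Finset V) (v : (s : Set V)) :
    (G.induce (s : Set V)).degree v = #{w ∈ s | G.Adj v w} := by
  rw [← card_neighborFinset_eq_degree, ← card_map (Function.Embedding.subtype _)]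
  congr 1
  ext w
  simp [and_comm]

section Counting

variable [Fintype V] [DecidableRel G.Adj]

theorem eq_top_of_card_sub_one_le_degree (h : ∀ v, Fintype.card V - 1 ≤ G.degree v) : G = ⊤ := by
  ext v w
  have hv : G.IsUniversal v := (G.degree_eq_card_sub_one v).mp
    (le_antisymm (Nat.le_sub_one_of_lt (G.degree_lt_card_verts v)) (h v))
  exact ⟨fun h => h.ne, fun h => hv h⟩

theorem eq_top_of_card_choose_two_le_card_edgeFinset
    (h : (Fintype.card V).choose 2 ≤ #G.edgeFinset) : G = ⊤ := by
  classical
  rw [← edgeFinset_inj, eq_of_subset_of_card_le (edgeFinset_mono le_top)]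
  rwa [card_edgeFinset_top_eq_card_choose_two]

theorem exists_degree_lt_of_two_mul_card_edgeFinset_lt {d : ℕ}
    (h : 2 * #G.edgeFinset < d * Fintype.card V) : ∃ v, G.degree v < d := by
  by_contra! hd
  rw [← sum_degrees_eq_twice_card_edges, mul_comm, ← smul_eq_mul, ← card_univ, ← sum_const] at h
  exact (sum_le_sum fun v _ => hd v).not_gt h

theorem card_edgeFinset_deleteEdges_singleton_add_one {e : Sym2 V}
    [DecidableRel (G.deleteEdges {e}).Adj] (he : e ∈ G.edgeSet) :
    #(G.deleteEdges {e}).edgeFinset + 1 = #G.edgeFinset := by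
  classical
  have : (G.deleteEdges {e}).edgeFinset = G.edgeFinset.erase e := by ext; simp [and_comm]
  rw [this, card_erase_add_one (by simpa)]

variable [DecidableEq V] {x y : V}

theorem card_edgeFinset_induce_compl_singleton_add_degree (y : V) :
    #(G.induce {y}ᶜ).edgeFinset + G.degree y = #G.edgeFinset := by
  rw [card_edgeFinset_induce_compl_singleton, card_edgeFinset_deleteIncidenceSet]
  have := G.degree_le_card_edgeFinset y
  omega

theorem Adj.degree_eq_card_sdiff_add (h : G.Adj x y) :
    G.degree y = #(G.neighborFinset y \ insert x (G.neighborFinset x)) + 1 +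
      #(G.neighborFinset x ∩ G.neighborFinset y) := by
  have hx : x ∈ G.neighborFinset y := (G.mem_neighborFinset y x).mpr h.symm
  have hxx : x ∉ G.neighborFinset y ∩ G.neighborFinset x := by simp
  rw [← card_neighborFinset_eq_degree, ← card_sdiff_add_card_inter _ (insert x _),
    inter_insert_of_mem hx, card_insert_of_notMem hxx, inter_comm]
  omega

theorem Adj.card_edgeFinset_le_contractEdge (h : G.Adj x y)
    [DecidableRel (G.contractEdge h.ne).Adj] :
    #G.edgeFinset ≤ #(G.contractEdge h.ne).edgeFinset + 1 +
      #(G.neighborFinset x ∩ G.neighborFinset y) := by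
  have hdeg := h.degree_eq_card_sdiff_add
  have hdel := card_edgeFinset_induce_compl_singleton_add_degree (G := G) y
  set N := G.neighborFinset y \ insert x (G.neighborFinset x)
  -- each `z ∈ N` gives a new edge `xz` of the contraction
  set T := N.image fun z => s((⟨x, h.ne⟩ : ({y}ᶜ : Set V)), mergeInto h.ne z)
  have hN : ∀ z ∈ N, z ≠ y ∧ z ≠ x ∧ ¬ G.Adj x z := fun z hz => by
    simp only [N, mem_sdiff, mem_insert, mem_neighborFinset, not_or] at hz
    exact ⟨hz.1.ne', hz.2.1, hz.2.2⟩
  have hT : T ⊆ (G.contractEdge h.ne).edgeFinset := by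
    intro e he
    obtain ⟨z, hz, rfl⟩ := mem_image.mp he
    have hyz : G.Adj y z := (G.mem_neighborFinset y z).mp (mem_sdiff.mp hz).1
    have := contract_adj_of_adj (φ := mergeInto h.ne) hyz
      (by simp [mergeInto_of_ne h.ne (hN z hz).1, Subtype.ext_iff, (hN z hz).2.1.symm])
    simpa using this
  have hdisj : Disjoint (G.induce {y}ᶜ).edgeFinset T := by
    refine disjoint_right.mpr fun e he he' => ?_
    obtain ⟨z, hz, rfl⟩ := mem_image.mp he
    rw [mem_edgeFinset, mem_edgeSet, mergeInto_of_ne h.ne (hN z hz).1] at he'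
    exact (hN z hz).2.2 he'
  have hTcard : #T = #N := card_image_of_injOn fun z hz z' hz' hzz' => by
    have := Sym2.congr_right.mp hzz'
    rw [mergeInto_of_ne h.ne (hN z hz).1, mergeInto_of_ne h.ne (hN z' hz').1] at this
    exact congrArg Subtype.val this
  have hcount : #(G.induce {y}ᶜ).edgeFinset + #T ≤ #(G.contractEdge h.ne).edgeFinset := by
    rw [← card_union_of_disjoint hdisj]
    exact card_le_card (union_subset (edgeFinset_mono
      (induce_compl_singleton_le_contractEdge h.ne)) hT)
  omega

end Counting

section Mader

variable [Fintype V] [DecidableRel G.Adj] {k : ℕ}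

theorem hasMinor_top_succ_of_forall_le_degree [DecidableEq V]
    (hnbhd : ∀ {U : Type u} [Fintype U] (H : SimpleGraph U) [DecidableRel H.Adj],
      k ≤ Fintype.card U → Fintype.card U ≤ 2 * k - 3 → (∀ w, k - 1 ≤ H.degree w) →
      H.HasMinor (⊤ : SimpleGraph (Fin k)))
    (hdeg : ∀ v, k ≤ G.degree v)
    (hcodeg : ∀ x y, G.Adj x y → k - 1 ≤ #(G.neighborFinset x ∩ G.neighborFinset y))
    (hE : 2 * #G.edgeFinset < 2 * (k - 1) * Fintype.card V) :
    G.HasMinor (⊤ : SimpleGraph (Fin (k + 1))) := by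
  classical
  obtain ⟨v, hv⟩ := exists_degree_lt_of_two_mul_card_edgeFinset_lt hE
  refine hasMinor_top_succ_of_subset_neighborSet (v := v) (s := (G.neighborFinset v : Set V))
    (by simp) (hnbhd _ ?_ ?_ fun u => ?_)
  · simpa only [coe_sort_coe, Fintype.card_coe, card_neighborFinset_eq_degree] using hdeg v
  · simp only [coe_sort_coe, Fintype.card_coe, card_neighborFinset_eq_degree]
    omega
  · have : {w ∈ G.neighborFinset v | G.Adj u w} = G.neighborFinset v ∩ G.neighborFinset u := by
      ext; simp
    rw [degree_induce_finset, this]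
    exact hcodeg v u ((G.mem_neighborFinset v u).mp u.2)

theorem hasMinor_top_succ_of_card_edgeFinset (hk : 3 ≤ k)
    (hnbhd : ∀ {U : Type u} [Fintype U] (H : SimpleGraph U) [DecidableRel H.Adj],
      k ≤ Fintype.card U → Fintype.card U ≤ 2 * k - 3 → (∀ w, k - 1 ≤ H.degree w) →
      H.HasMinor (⊤ : SimpleGraph (Fin k)))
    (hV : k + 1 ≤ Fintype.card V) (hE : (k - 1) * Fintype.card V < #G.edgeFinset + k.choose 2) :
    G.HasMinor (⊤ : SimpleGraph (Fin (k + 1))) := by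
  have hchoose := Nat.add_one_choose_two_add_choose_two (by omega : 1 ≤ k)
  have hC : 3 ≤ k.choose 2 := Nat.choose_le_choose 2 hk
  obtain ⟨n, hn⟩ : ∃ n, Fintype.card V = n := ⟨_, rfl⟩
  induction n using Nat.strong_induction_on generalizing V with
  | _ n ihn =>
  obtain ⟨m, hm⟩ : ∃ m, #G.edgeFinset = m := ⟨_, rfl⟩
  induction m using Nat.strong_induction_on generalizing G with
  | _ m ihm =>
  classical
  subst hn hm
  by_cases hmin : (k - 1) * Fintype.card V + 1 < #G.edgeFinset + k.choose 2
  · obtain ⟨e, he⟩ : G.edgeFinset.Nonempty := by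
      rw [← card_pos]
      have := Nat.mul_le_mul_left (k - 1) hV
      omega
    have := card_edgeFinset_deleteEdges_singleton_add_one (mem_edgeFinset.mp he)
    exact (IsContained.of_le (G.deleteEdges_le _)).hasMinor.trans
      (ihm _ (by omega) (G := G.deleteEdges {e}) (by omega) rfl)
  obtain hVeq | hVlt := eq_or_lt_of_le hV
  · rw [← hVeq] at hE
    exact hasMinor_top_of_eq_top
      (eq_top_of_card_choose_two_le_card_edgeFinset (by rw [← hVeq]; omega)) hVeq.symm
  have hmul : (k - 1) * (Fintype.card V - 1) + (k - 1) = (k - 1) * Fintype.card V := by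
    rw [← Nat.mul_add_one, Nat.sub_add_cancel (by omega)]
  have hcard (v : V) : Fintype.card ({v}ᶜ : Set V) = Fintype.card V - 1 := by
    rw [Fintype.card_compl_set, Set.card_singleton]
  by_cases hlow : ∃ v, G.degree v ≤ k - 1
  · obtain ⟨v, hv⟩ := hlow
    have := card_edgeFinset_induce_compl_singleton_add_degree (G := G) v
    exact (Copy.induce G _).isContained.hasMinor.trans (ihn _ (by omega) (G := G.induce {v}ᶜ)
      (by rw [hcard]; omega) (by rw [hcard]; omega) (hcard v))
  by_cases hcodeg : ∃ x y, G.Adj x y ∧ #(G.neighborFinset x ∩ G.neighborFinset y) ≤ k - 2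
  · obtain ⟨x, y, hxy, hxy'⟩ := hcodeg
    have := hxy.card_edgeFinset_le_contractEdge
    exact hxy.hasMinor_contractEdge.trans (ihn _ (by omega) (G := G.contractEdge hxy.ne)
      (by rw [hcard]; omega) (by rw [hcard]; omega) (hcard y))
  push Not at hlow hcodeg
  exact hasMinor_top_succ_of_forall_le_degree hnbhd (fun v => by have := hlow v; omega)
    (fun x y hxy => by have := hcodeg x y hxy; omega) (by rw [mul_assoc]; omega)

theorem hasMinor_top_four_of_card_edgeFinset (hV : 4 ≤ Fintype.card V)
    (hE : 2 * Fintype.card V < #G.edgeFinset + 3) : G.HasMinor (⊤ : SimpleGraph (Fin 4)) :=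
  hasMinor_top_succ_of_card_edgeFinset le_rfl
    (fun _ _ hU hU' hdeg => hasMinor_top_of_eq_top
      (eq_top_of_card_sub_one_le_degree fun w => by have := hdeg w; omega) (by omega))
    hV (by rw [show Nat.choose 3 2 = 3 by decide]; omega)

theorem hasMinor_top_five_of_card_edgeFinset (hV : 5 ≤ Fintype.card V)
    (hE : 3 * Fintype.card V < #G.edgeFinset + 6) : G.HasMinor (⊤ : SimpleGraph (Fin 5)) := by
  refine hasMinor_top_succ_of_card_edgeFinset (k := 4) (by norm_num) (fun H _ hU hU' hdeg => ?_)
    hV (by rw [show Nat.choose 4 2 = 6 by decide]; omega)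
  obtain hU | hU := eq_or_lt_of_le hU
  · exact hasMinor_top_of_eq_top
      (eq_top_of_card_sub_one_le_degree fun w => by have := hdeg w; omega) hU.symm
  · -- five vertices of degree at least 3 carry at least 8 edges
    refine hasMinor_top_four_of_card_edgeFinset (by omega) ?_
    by_contra! hH
    obtain ⟨w, hw⟩ := exists_degree_lt_of_two_mul_card_edgeFinset_lt (G := H) (d := 3) (by omega)
    exact hw.not_ge (hdeg w)

theorem exists_degree_le_five_of_not_hasMinor [Nonempty V]
    (h : ¬ G.HasMinor (⊤ : SimpleGraph (Fin 5))) : ∃ v, G.degree v ≤ 5 := by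
  by_contra! hdeg
  obtain ⟨v⟩ := ‹Nonempty V›
  have hV := (hdeg v).trans (G.degree_lt_card_verts v)
  refine h (hasMinor_top_five_of_card_edgeFinset (by omega) ?_)
  by_contra! hE
  obtain ⟨w, hw⟩ := exists_degree_lt_of_two_mul_card_edgeFinset_lt (G := G) (d := 6) (by omega)
  exact hw.not_ge (hdeg w)

end Mader

theorem exists_coloring_not_monochromatic_triangle_of_degenerate [Fintype V]
    [DecidableRel G.Adj] {c : ℕ}
    (h : ∀ s : Finset V, s.Nonempty → ∃ v ∈ s, #{w ∈ s | G.Adj v w} < 2 * c) :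
    ∃ col : V → Fin c, ∀ t, G.IsNClique 3 t → ∃ u ∈ t, ∃ v ∈ t, col u ≠ col v := by
  classical
  suffices ∀ s : Finset V, ∃ col : V → Fin c,
      ∀ t ⊆ s, G.IsNClique 3 t → ∃ u ∈ t, ∃ v ∈ t, col u ≠ col v by
    obtain ⟨col, hcol⟩ := this univ
    exact ⟨col, fun t => hcol t (subset_univ t)⟩
  intro s
  induction s using Finset.strongInduction with
  | H s ih =>
  obtain rfl | hs := s.eq_empty_or_nonempty
  · have hnot : ∀ t ⊆ (∅ : Finset V), ¬ G.IsNClique 3 t := fun t ht hcl => by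
      simpa [subset_empty.mp ht] using hcl.card_eq
    rcases isEmpty_or_nonempty V with hV | hV
    · exact ⟨isEmptyElim, fun t ht hcl => (hnot t ht hcl).elim⟩
    · obtain ⟨v, -, hv⟩ := h univ univ_nonempty
      exact ⟨fun _ => ⟨0, by omega⟩, fun t ht hcl => (hnot t ht hcl).elim⟩
  obtain ⟨v, hv, hdeg⟩ := h s hs
  obtain ⟨col, hcol⟩ := ih (s.erase v) (erase_ssubset hv)
  obtain ⟨i, -, hi⟩ := exists_card_fiber_lt_of_card_lt_mul (s := {w ∈ s | G.Adj v w}) (f := col)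
    (t := univ) (n := 2) (by rwa [card_univ, Fintype.card_fin, mul_comm])
  refine ⟨Function.update col v i, fun t hts ht => ?_⟩
  by_cases hvt : v ∈ t
  · by_contra! hmono
    have hsub : t.erase v ⊆ {w ∈ {w ∈ s | G.Adj v w} | col w = i} := fun w hw => by
      obtain ⟨hwv, hwt⟩ := mem_erase.mp hw
      have := hmono w hwt v hvt
      rw [Function.update_of_ne hwv, Function.update_self] at this
      simp [hts hwt, ht.isClique hvt hwt hwv.symm, this]
    have := card_le_card hsub
    rw [card_erase_of_mem hvt, ht.card_eq] at this
    omega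
  · have hts' : t ⊆ s.erase v := fun w hw => mem_erase.mpr ⟨ne_of_mem_of_not_mem hw hvt, hts hw⟩
    obtain ⟨a, ha, b, hb, hab⟩ := hcol t hts' ht
    refine ⟨a, ha, b, hb, ?_⟩
    rwa [Function.update_of_ne (ne_of_mem_of_not_mem ha hvt),
      Function.update_of_ne (ne_of_mem_of_not_mem hb hvt)]

theorem exists_coloring_not_monochromatic_triangle_of_not_hasMinor [Fintype V]
    (h : ¬ G.HasMinor (⊤ : SimpleGraph (Fin 5))) :
    ∃ col : V → Fin 3, ∀ t, G.IsNClique 3 t → ∃ u ∈ t, ∃ v ∈ t, col u ≠ col v := by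
  classical
  refine exists_coloring_not_monochromatic_triangle_of_degenerate fun s hs => ?_
  have : Nonempty (s : Set V) := hs.coe_sort
  obtain ⟨⟨v, hv⟩, hdeg⟩ := exists_degree_le_five_of_not_hasMinor (G := G.induce s)
    fun hs => h ((Copy.induce G _).isContained.hasMinor.trans hs)
  rw [degree_induce_finset] at hdeg
  exact ⟨v, hv, hdeg.trans_lt (by norm_num)⟩

theorem IsMaxClique.exists_isNClique_three_subset
    (htri : ∀ u v : V, G.Adj u v → ∃ w : V, G.Adj u w ∧ G.Adj v w) {s : Set V}
    (hs : G.IsMaxClique s) (hnt : s.Nontrivial) : ∃ t : Finset V, ↑t ⊆ s ∧ G.IsNClique 3 t := by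
  classical
  obtain ⟨u, hu, v, hv, huv⟩ := hnt
  have hadj := hs.1 hu hv huv
  obtain ⟨w, hw, hwu, hwv⟩ : ∃ w ∈ s, w ≠ u ∧ w ≠ v := by
    by_contra! hsub
    obtain ⟨w, huw, hvw⟩ := htri u v hadj
    have hclq : G.IsClique (insert w s) := hs.1.insert fun b hb _ => by
      obtain rfl | hbu := eq_or_ne b u
      · exact huw.symm
      · exact hsub b hb hbu ▸ hvw.symm
    have hws : w ∈ s := hs.2 _ hclq (Set.subset_insert w s) ▸ Set.mem_insert w s
    obtain rfl | hwu := eq_or_ne w u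
    · exact huw.ne rfl
    · exact hvw.ne (hsub w hws hwu).symm
  refine ⟨{u, v, w}, by simp [Set.insert_subset_iff, hu, hv, hw], ?_⟩
  exact is3Clique_triple_iff.mpr ⟨hadj, hs.1 hu hw hwu.symm, hs.1 hv hw hwv.symm⟩

end SimpleGraph

theorem K5_minor_free_every_edge_in_triangle_three_clique_colorable_general {V : Type*} [Fintype V]
    (G : SimpleGraph V) (hK5 : ¬ G.HasMinor (⊤ : SimpleGraph (Fin 5)))
    (htri : ∀ u v : V, G.Adj u v → ∃ w : V, G.Adj u w ∧ G.Adj v w) :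
    ∃ c : V → Fin 3, G.IsCliqueColoring c ∧
      ∀ t : Finset V, G.IsNClique 3 t → ∃ u ∈ t, ∃ v ∈ t, c u ≠ c v := by
  obtain ⟨c, hc⟩ := exists_coloring_not_monochromatic_triangle_of_not_hasMinor hK5
  refine ⟨c, fun s hs hnt => ?_, hc⟩
  obtain ⟨t, hts, ht⟩ := hs.exists_isNClique_three_subset htri hnt
  obtain ⟨u, hu, v, hv, huv⟩ := hc t ht
  exact ⟨u, hts hu, v, hts hv, huv⟩

/-- A `K₅`-minor-free graph with at least one edge in which every edge lies in a
triangle has a 3-clique-coloring with no monochromatic triangle. -/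
theorem K5_minor_free_every_edge_in_triangle_three_clique_colorable {V : Type*} [Fintype V]
    (G : SimpleGraph V) (hK5 : ¬ G.HasMinor (⊤ : SimpleGraph (Fin 5)))
    (hedge : ∃ u v : V, G.Adj u v)
    (htri : ∀ u v : V, G.Adj u v → ∃ w : V, G.Adj u w ∧ G.Adj v w) :
    ∃ c : V → Fin 3, G.IsCliqueColoring c ∧
      ∀ t : Finset V, G.IsNClique 3 t → ∃ u ∈ t, ∃ v ∈ t, c u ≠ c v :=
  K5_minor_free_every_edge_in_triangle_three_clique_colorable_general G hK5 htri
end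

section
/- Let G be a claw-free, K_5-minor-free graph containing no clique on 4 vertices, and let v be a vertex of degree 5 in G. If the graph G − v obtained by deleting v is 2-clique-colorable, then G is 2-clique-colorable. -/
/-
Claw-freeness and K₄-freeness force the five neighbours of `v` to span a graph with neither a
triangle nor an independent triple, i.e. a 5-cycle `a₀ … a₄` (the rim). Outside the closed
neighbourhood of `v`, each rim edge `aᵢaᵢ₊₁` has at most one common neighbour, its witness (two
would give a K₄ or a claw at `aᵢ`). Keep the colouring of `G - v` off the rim and recolour the
rim and `v`. A maximal clique through `v` contains a rim edge; one avoiding `v` but containing a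
rim edge contains its witness; one meeting the rim in a single `aᵢ` contains, by claw-freeness at
`aᵢ`, the witnesses of both rim edges at `aᵢ`; all others are maximal cliques of `G - v`. What
remains is a constraint problem on the 5-cycle, parametrised by the colours of the witnesses,
which is solved by exhaustive search.
-/

open SimpleGraph

namespace SimpleGraph

variable {V : Type*} {G : SimpleGraph V}

theorem ClawFree.adj_or_adj_or_adj (hG : G.ClawFree) {x y z w : V}
    (hy : G.Adj x y) (hz : G.Adj x z) (hw : G.Adj x w)
    (hyz : y ≠ z) (hyw : y ≠ w) (hzw : z ≠ w) :
    G.Adj y z ∨ G.Adj y w ∨ G.Adj z w := by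
  by_contra! h
  obtain ⟨h₁, h₂, h₃⟩ := h
  have := G.ne_of_adj hy
  have := G.ne_of_adj hz
  have := G.ne_of_adj hw
  refine hG.false ⟨⟨Sum.elim (fun _ => x) ![y, z, w], ?_⟩, ?_⟩
  · rintro (a | a) (b | b) hab <;> fin_cases a <;> fin_cases b <;> simp_all
  · rintro (a | a) (b | b) <;> fin_cases a <;> fin_cases b <;>
      simp_all [completeBipartiteGraph, G.adj_comm, DFunLike.coe]

theorem CliqueFree.induce_neighborSet {n : ℕ} (h : G.CliqueFree (n + 1)) (v : V) :
    (G.induce (G.neighborSet v)).CliqueFree n := by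
  rw [cliqueFree_induce_iff, ← Set.univ_inter (G.neighborSet v)]
  exact (h.cliqueFreeOn (s := Set.univ)).of_succ _ (Set.mem_univ v)

theorem ClawFree.induce_neighborSet_indepSetFree (hG : G.ClawFree) (v : V) :
    (G.induce (G.neighborSet v)).IndepSetFree 3 := by
  classical
  rintro t ⟨ht, hcard⟩
  obtain ⟨x, y, z, hxy, hxz, hyz, rfl⟩ := Finset.card_eq_three.1 hcard
  rcases hG.adj_or_adj_or_adj x.2 y.2 z.2 (Subtype.coe_ne_coe.2 hxy)
      (Subtype.coe_ne_coe.2 hxz) (Subtype.coe_ne_coe.2 hyz) with h | h | h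
  · exact ht (by simp) (by simp) hxy h
  · exact ht (by simp) (by simp) hxz h
  · exact ht (by simp) (by simp) hyz h

theorem IsMaxClique.exists_not_adj_of_notMem {s : Set V} (hs : G.IsMaxClique s) {x : V}
    (hx : x ∉ s) : ∃ y ∈ s, y ≠ x ∧ ¬ G.Adj x y := by
  by_contra! h
  have := hs.2 _ (hs.1.insert fun y hy hxy => h y hy hxy.symm) (Set.subset_insert x s)
  exact hx (this ▸ Set.mem_insert x s)

theorem IsMaxClique.preimage_val {s t : Set V} (hs : G.IsMaxClique s) (hst : s ⊆ t) :
    (G.induce t).IsMaxClique (Subtype.val ⁻¹' s) := by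
  refine ⟨fun x hx y hy hxy => hs.1 hx hy (Subtype.val_injective.ne hxy), fun u hu hsu => ?_⟩
  have hsu' : s = Subtype.val '' u :=
    hs.2 _ (isClique_induce_iff.1 hu) fun x hx => ⟨⟨x, hst hx⟩, hsu hx, rfl⟩
  refine hsu.antisymm fun x hx => ?_
  change (x : V) ∈ s
  exact hsu' ▸ ⟨x, hx, rfl⟩

theorem exists_forall_isMaxClique_of_cliqueColorable_induce {k : ℕ} [NeZero k] {t : Set V}
    (h : (G.induce t).CliqueColorable k) :
    ∃ c : V → Fin k, ∀ s, G.IsMaxClique s → s ⊆ t → s.Nontrivial →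
      ∃ x ∈ s, ∃ y ∈ s, c x ≠ c y := by
  classical
  obtain ⟨c, hc⟩ := h
  refine ⟨fun x => if hx : x ∈ t then c ⟨x, hx⟩ else 0, fun s hs hst hnt => ?_⟩
  obtain ⟨x, hx, y, hy, hxy⟩ := hnt
  obtain ⟨x', hx', y', hy', hne⟩ := hc _ (hs.preimage_val hst)
    ⟨⟨x, hst hx⟩, hx, ⟨y, hst hy⟩, hy, by simpa using hxy⟩
  exact ⟨x', hx', y', hy', by simpa [x'.2, y'.2] using hne⟩

theorem cycleGraph_adj_iff {n : ℕ} {i j : Fin (n + 2)} :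
    (cycleGraph (n + 2)).Adj i j ↔ j = i + 1 ∨ i = j + 1 := by
  rw [cycleGraph_adj, sub_eq_iff_eq_add, sub_eq_iff_eq_add, add_comm 1 i, add_comm 1 j, or_comm]

section FiveVertices

variable {W : Type*} {H : SimpleGraph W}

theorem IndepSetFree.adj_or_adj_or_adj [DecidableEq W] (h : H.IndepSetFree 3) {x y z : W}
    (hxy : x ≠ y) (hxz : x ≠ z) (hyz : y ≠ z) :
    H.Adj x y ∨ H.Adj x z ∨ H.Adj y z := by
  by_contra! hn
  refine (cliqueFree_compl H).2 h {x, y, z} (is3Clique_triple_iff.2 ?_)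
  simp [compl_adj, *]

theorem eq_or_eq_or_eq_of_adj (h3 : H.CliqueFree 3) (hi : H.IndepSetFree 3) {x y z w : W}
    (hy : H.Adj x y) (hz : H.Adj x z) (hw : H.Adj x w) : y = z ∨ y = w ∨ z = w := by
  classical
  by_contra! hne
  obtain ⟨hyz, hyw, hzw⟩ := hne
  have hind := isIndepSet_neighborSet_of_triangleFree H h3 x
  rcases hi.adj_or_adj_or_adj hyz hyw hzw with h | h | h
  exacts [hind hy hz hyz h, hind hy hw hyw h, hind hz hw hzw h]

theorem exists_adj_ne [Fintype W] (h3 : H.CliqueFree 3) (hi : H.IndepSetFree 3)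
    (hcard : Fintype.card W = 5) (x y : W) : ∃ z, z ≠ y ∧ H.Adj x z := by
  classical
  by_contra! hxy
  have hcard' : 2 < (Finset.univ \ {x, y}).card := by
    have := Finset.card_le_two (a := x) (b := y)
    rw [Finset.card_sdiff_of_subset (Finset.subset_univ _), Finset.card_univ]
    omega
  obtain ⟨p, hp, q, hq, r, hr, hpq, hpr, hqr⟩ := Finset.two_lt_card.1 hcard'
  simp only [Finset.mem_sdiff, Finset.mem_univ, Finset.mem_insert, Finset.mem_singleton,
    true_and, not_or] at hp hq hr
  have hadj : ∀ u v, u ≠ x → v ≠ x → u ≠ v → u ≠ y → v ≠ y → H.Adj u v := by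
    intro u v hu hv huv huy hvy
    rcases hi.adj_or_adj_or_adj hu.symm hv.symm huv with h | h | h
    exacts [(hxy u huy h).elim, (hxy v hvy h).elim, h]
  exact isIndepSet_neighborSet_of_triangleFree H h3 p (hadj p q hp.1 hq.1 hpq hp.2 hq.2)
    (hadj p r hp.1 hr.1 hpr hp.2 hr.2) hqr (hadj q r hq.1 hr.1 hqr hq.2 hr.2)

theorem not_adj_of_adj_of_adj_of_adj [Fintype W] (h3 : H.CliqueFree 3) (hi : H.IndepSetFree 3)
    (hcard : Fintype.card W = 5) {p q r s : W} (hpq : H.Adj p q) (hqr : H.Adj q r)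
    (hrs : H.Adj r s) (hpr : p ≠ r) (hqs : q ≠ s) : ¬ H.Adj p s := by
  classical
  intro hps
  have three : ∀ {x y z w : W}, H.Adj x y → H.Adj x z → H.Adj x w → y = z ∨ y = w ∨ z = w :=
    eq_or_eq_or_eq_of_adj h3 hi
  obtain ⟨x, hx⟩ : ∃ x, x ∉ ({p, q, r, s} : Finset W) := by
    by_contra! hall
    have := Finset.card_le_four (a := p) (b := q) (c := r) (d := s)
    rw [Finset.eq_univ_of_forall hall, Finset.card_univ] at this
    omega
  simp only [Finset.mem_insert, Finset.mem_singleton, not_or] at hx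
  obtain ⟨hxp, hxq, hxr, hxs⟩ := hx
  rcases hi.adj_or_adj_or_adj hxp hxr hpr with h | h | h
  · rcases three hpq hps h.symm with h | h | h
    exacts [hqs h, hxq h.symm, hxs h.symm]
  · rcases three hqr.symm hrs h.symm with h | h | h
    exacts [hqs h, hxq h.symm, hxs h.symm]
  · rcases three hpq hps h with h | h | h
    exacts [hqs h, (H.ne_of_adj hqr) h, (H.ne_of_adj hrs).symm h]

theorem exists_injective_forall_adj_add_one [Fintype W] (h3 : H.CliqueFree 3)
    (hi : H.IndepSetFree 3) (hcard : Fintype.card W = 5) :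
    ∃ a : Fin 5 → W, Function.Injective a ∧ ∀ i, H.Adj (a i) (a (i + 1)) := by
  classical
  have three : ∀ {x y z w : W}, H.Adj x y → H.Adj x z → H.Adj x w → y = z ∨ y = w ∨ z = w :=
    eq_or_eq_or_eq_of_adj h3 hi
  have other := exists_adj_ne h3 hi hcard
  obtain ⟨a₀⟩ : Nonempty W := Fintype.card_pos_iff.1 (by omega)
  obtain ⟨a₁, -, h01⟩ := other a₀ a₀
  obtain ⟨a₄, h41, h04⟩ := other a₀ a₁
  obtain ⟨a₂, h20, h12⟩ := other a₁ a₀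
  obtain ⟨a₃, h31, h23⟩ := other a₂ a₁
  obtain ⟨b, hb2, h3b⟩ := other a₃ a₂
  have h24 : a₂ ≠ a₄ := by
    rintro rfl
    exact isIndepSet_neighborSet_of_triangleFree H h3 a₀ h01 h04 h41.symm h12
  have h30 : a₃ ≠ a₀ := by
    rintro rfl
    rcases three h01 h04 h23.symm with h | h | h
    exacts [h41.symm h, (H.ne_of_adj h12) h, h24 h.symm]
  have h34 : a₃ ≠ a₄ := by
    rintro rfl
    exact not_adj_of_adj_of_adj_of_adj h3 hi hcard h01 h12 h23 h20.symm h31.symm h04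
  let a : Fin 5 → W := ![a₀, a₁, a₂, a₃, a₄]
  have ha : Function.Injective a := by
    have := H.ne_of_adj h01; have := H.ne_of_adj h04
    have := H.ne_of_adj h12; have := H.ne_of_adj h23
    intro i j hij
    fin_cases i <;> fin_cases j <;> simp_all [a, eq_comm]
  have hb : b = a₄ := by
    obtain ⟨k, rfl⟩ :=
      ((Fintype.bijective_iff_injective_and_card a).2 ⟨ha, by simp [hcard]⟩).2 b
    fin_cases k
    · rcases three h01 h04 h3b.symm with h | h | h
      exacts [(h41.symm h).elim, (h31.symm h).elim, (h34.symm h).elim]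
    · rcases three h01.symm h12 h3b.symm with h | h | h
      exacts [(h20.symm h).elim, (h30.symm h).elim, (H.ne_of_adj h23 h).elim]
    · exact (hb2 rfl).elim
    · exact (H.irrefl h3b).elim
    · rfl
  subst hb
  refine ⟨a, ha, fun i => ?_⟩
  fin_cases i
  exacts [h01, h12, h23, h3b, h04.symm]

theorem adj_iff_of_forall_adj_add_one (h3 : H.CliqueFree 3) (hi : H.IndepSetFree 3)
    {a : Fin 5 → W} (ha : Function.Injective a) (hadj : ∀ i, H.Adj (a i) (a (i + 1)))
    (i j : Fin 5) :
    H.Adj (a i) (a j) ↔ j = i + 1 ∨ i = j + 1 := by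
  refine ⟨fun h => ?_, ?_⟩
  · by_contra hij
    have hprev : H.Adj (a i) (a (i + 4)) := by
      simpa [add_assoc] using (hadj (i + 4)).symm
    have key : ∀ i j : Fin 5, ¬(j = i + 1 ∨ i = j + 1) →
        i + 1 ≠ i + 4 ∧ i + 1 ≠ j ∧ i + 4 ≠ j := by decide
    rcases eq_or_eq_or_eq_of_adj h3 hi (hadj i) hprev h with h | h | h
    exacts [(key i j hij).1 (ha h), (key i j hij).2.1 (ha h), (key i j hij).2.2 (ha h)]
  · rintro (rfl | rfl)
    exacts [hadj i, (hadj j).symm]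

theorem nonempty_iso_cycleGraph_five [Fintype W] (h3 : H.CliqueFree 3) (hi : H.IndepSetFree 3)
    (hcard : Fintype.card W = 5) : Nonempty (cycleGraph 5 ≃g H) := by
  obtain ⟨a, ha, hadj⟩ := exists_injective_forall_adj_add_one h3 hi hcard
  have hbij : Function.Bijective a :=
    (Fintype.bijective_iff_injective_and_card a).2 ⟨ha, by simp [hcard]⟩
  refine ⟨⟨Equiv.ofBijective a hbij, fun {i j} => ?_⟩⟩
  simp only [Equiv.ofBijective_apply, adj_iff_of_forall_adj_add_one h3 hi ha hadj,
    cycleGraph_adj_iff]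

end FiveVertices

structure IsFiveWheel (G : SimpleGraph V) (v : V) (a : Fin 5 → V) : Prop where
  injective : Function.Injective a
  adj_iff_mem_range : ∀ x, G.Adj v x ↔ x ∈ Set.range a
  adj_iff : ∀ i j, G.Adj (a i) (a j) ↔ j = i + 1 ∨ i = j + 1

theorem exists_isFiveWheel [Fintype V] [DecidableRel G.Adj] (hclaw : G.ClawFree)
    (h4 : G.CliqueFree 4) {v : V} (hv : G.degree v = 5) : ∃ a, G.IsFiveWheel v a := by
  obtain ⟨φ⟩ := nonempty_iso_cycleGraph_five (h4.induce_neighborSet v)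
    (hclaw.induce_neighborSet_indepSetFree v) (by rw [card_neighborSet_eq_degree, hv])
  refine ⟨fun i => φ i, Subtype.val_injective.comp φ.injective, fun x => ⟨fun hx => ?_, ?_⟩,
    fun i j => ?_⟩
  · exact ⟨φ.symm ⟨x, hx⟩, by simp⟩
  · rintro ⟨i, rfl⟩
    exact (φ i).2
  · rw [← cycleGraph_adj_iff]
    exact φ.map_adj_iff

def IsRimWitness (G : SimpleGraph V) (v : V) (a : Fin 5 → V) (i : Fin 5) (w : V) : Prop :=
  w ≠ v ∧ ¬ G.Adj v w ∧ G.Adj (a i) w ∧ G.Adj (a (i + 1)) w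

open Classical in
noncomputable def rimWitnessColor (G : SimpleGraph V) (v : V) (a : Fin 5 → V) {k : ℕ}
    (c : V → Fin k) (i : Fin 5) : Option (Fin k) :=
  if h : ∃ w, G.IsRimWitness v a i w then some (c h.choose) else none

-- `r` colours the rim, `γ` the centre, and `β i` is the colour of the witness of the rim edge
-- `a i a (i + 1)`, if any. The three conditions exclude monochromatic maximal cliques meeting the
-- rim in the single vertex `a i`, meeting it in an edge but avoiding the centre, and through the
-- centre, respectively.
set_option maxRecDepth 10000 in
theorem exists_rim_coloring (β : Fin 5 → Option (Fin 2)) :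
    ∃ (r : Fin 5 → Fin 2) (γ : Fin 2),
      (∀ i, β (i + 4) = β i → β i ≠ some (r i)) ∧
      (∀ i, β i = some (r i) → r (i + 1) ≠ r i) ∧
      (∀ i, r i = γ → r (i + 1) ≠ γ) := by
  revert β
  decide

namespace IsFiveWheel

variable {v : V} {a : Fin 5 → V}

theorem adj_center (hW : G.IsFiveWheel v a) (i : Fin 5) : G.Adj v (a i) :=
  (hW.adj_iff_mem_range _).2 ⟨i, rfl⟩

theorem adj_add_one (hW : G.IsFiveWheel v a) (i : Fin 5) : G.Adj (a i) (a (i + 1)) :=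
  (hW.adj_iff i _).2 (Or.inl rfl)

theorem isRimWitness_unique (hW : G.IsFiveWheel v a) (hclaw : G.ClawFree)
    (h4 : G.CliqueFree 4) {i : Fin 5} {w w' : V} (h : G.IsRimWitness v a i w)
    (h' : G.IsRimWitness v a i w') : w = w' := by
  classical
  obtain ⟨hwv, hvw, hiw, hjw⟩ := h
  obtain ⟨hwv', hvw', hiw', hjw'⟩ := h'
  by_contra hne
  by_cases hadj : G.Adj w w'
  · refine h4 {a i, a (i + 1), w, w'} ((is3Clique_triple_iff.2 ⟨hjw, hjw', hadj⟩).insert ?_)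
    simp [hW.adj_add_one i, hiw, hiw']
  · rcases hclaw.adj_or_adj_or_adj (hW.adj_center i).symm hiw hiw' hwv.symm hwv'.symm hne
      with h | h | h
    exacts [hvw h, hvw' h, hadj h]

theorem rimWitnessColor_eq (hW : G.IsFiveWheel v a) (hclaw : G.ClawFree)
    (h4 : G.CliqueFree 4) {k : ℕ} (c : V → Fin k) {i : Fin 5} {w : V}
    (h : G.IsRimWitness v a i w) : G.rimWitnessColor v a c i = some (c w) := by
  have hex : ∃ w, G.IsRimWitness v a i w := ⟨w, h⟩
  rw [rimWitnessColor, dif_pos hex, hW.isRimWitness_unique hclaw h4 hex.choose_spec h]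

theorem exists_add_one_mem (hW : G.IsFiveWheel v a) {s : Set V} (hs : G.IsClique s)
    {i j : Fin 5} (hi : a i ∈ s) (hj : a j ∈ s) (hij : i ≠ j) :
    ∃ k, a k ∈ s ∧ a (k + 1) ∈ s := by
  rcases (hW.adj_iff i j).1 (hs hi hj (hW.injective.ne hij)) with rfl | rfl
  exacts [⟨i, hi, hj⟩, ⟨j, hj, hi⟩]

theorem exists_add_one_mem_of_center_mem (hW : G.IsFiveWheel v a) {s : Set V}
    (hs : G.IsMaxClique s) (hvs : v ∈ s) (hnt : s.Nontrivial) :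
    ∃ k, a k ∈ s ∧ a (k + 1) ∈ s := by
  obtain ⟨x, hx, hxv⟩ := hnt.exists_ne v
  obtain ⟨i, rfl⟩ := (hW.adj_iff_mem_range x).1 (hs.1 hvs hx hxv.symm)
  by_cases hi' : a (i + 1) ∈ s
  · exact ⟨i, hx, hi'⟩
  obtain ⟨y, hy, -, hny⟩ := hs.exists_not_adj_of_notMem hi'
  have hyv : y ≠ v := by
    rintro rfl
    exact hny (hW.adj_center _).symm
  obtain ⟨j, rfl⟩ := (hW.adj_iff_mem_range y).1 (hs.1 hvs hy hyv.symm)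
  refine hW.exists_add_one_mem hs.1 hx hy ?_
  rintro rfl
  exact hny (hW.adj_add_one i).symm

theorem exists_isRimWitness_of_add_one_mem (hW : G.IsFiveWheel v a) {s : Set V}
    (hs : G.IsMaxClique s) (hvs : v ∉ s) {k : Fin 5} (hk : a k ∈ s) (hk' : a (k + 1) ∈ s) :
    ∃ w ∈ s, G.IsRimWitness v a k w := by
  obtain ⟨w, hws, hwv, hvw⟩ := hs.exists_not_adj_of_notMem hvs
  have hwk : a k ≠ w := by
    rintro rfl
    exact hvw (hW.adj_center k)
  have hwk' : a (k + 1) ≠ w := by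
    rintro rfl
    exact hvw (hW.adj_center _)
  exact ⟨w, hws, hwv, hvw, hs.1 hk hws hwk, hs.1 hk' hws hwk'⟩

theorem exists_isRimWitness_of_forall_mem_eq (hW : G.IsFiveWheel v a) (hclaw : G.ClawFree)
    {s : Set V} (hs : G.IsMaxClique s) (hvs : v ∉ s) {i : Fin 5} (hi : a i ∈ s)
    (huniq : ∀ j, a j ∈ s → j = i) :
    (∃ w ∈ s, G.IsRimWitness v a (i + 4) w) ∧ ∃ w ∈ s, G.IsRimWitness v a i w := by
  have hfin : ∀ i : Fin 5, i + 1 ≠ i ∧ i + 4 ≠ i ∧ i + 1 ≠ i + 4 ∧ i + 4 + 1 = i ∧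
      ¬(i + 4 = i + 1 + 1 ∨ i + 1 = i + 4 + 1) := by decide
  obtain ⟨hi1, hi4, h14, hi41, hn14⟩ := hfin i
  have hnext := hW.adj_add_one i
  have hprev : G.Adj (a i) (a (i + 4)) := by
    simpa only [hi41] using (hW.adj_add_one (i + 4)).symm
  have hout : ∀ j, j ≠ i → a j ∉ s := fun j hj h => hj (huniq j h)
  -- claw-freeness at `a i`: every other vertex of `s` sees `a (i + 1)` or `a (i + 4)`
  have hside : ∀ w ∈ s, w ≠ a i → w ≠ v ∧ ¬ G.Adj v w ∧ G.Adj (a i) w ∧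
      (G.Adj (a (i + 1)) w ∨ G.Adj (a (i + 4)) w) := by
    intro w hws hwi
    have hvw : ¬ G.Adj v w := by
      intro h
      obtain ⟨j, rfl⟩ := (hW.adj_iff_mem_range w).1 h
      exact hwi (congrArg a (huniq j hws))
    have hiw := hs.1 hi hws hwi.symm
    refine ⟨fun h => hvs (h ▸ hws), hvw, hiw, ?_⟩
    rcases hclaw.adj_or_adj_or_adj hnext hprev hiw (hW.injective.ne h14)
        (fun h => hout _ hi1 (h ▸ hws)) (fun h => hout _ hi4 (h ▸ hws)) with h | h | h
    exacts [absurd h ((hW.adj_iff _ _).not.2 hn14), Or.inl h, Or.inr h]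
  obtain ⟨w₁, hw₁s, -, hn₁⟩ := hs.exists_not_adj_of_notMem (hout _ hi1)
  obtain ⟨w₄, hw₄s, -, hn₄⟩ := hs.exists_not_adj_of_notMem (hout _ hi4)
  obtain ⟨hw₁v, hvw₁, hiw₁, h₁⟩ := hside w₁ hw₁s (by rintro rfl; exact hn₁ hnext.symm)
  obtain ⟨hw₄v, hvw₄, hiw₄, h₄⟩ := hside w₄ hw₄s (by rintro rfl; exact hn₄ hprev.symm)
  exact ⟨⟨w₁, hw₁s, hw₁v, hvw₁, h₁.resolve_left hn₁, by rwa [hi41]⟩,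
    ⟨w₄, hw₄s, hw₄v, hvw₄, hiw₄, h₄.resolve_right hn₄⟩⟩

theorem extend_update_apply_center [DecidableEq V] (hW : G.IsFiveWheel v a) {k : ℕ}
    (r : Fin 5 → Fin k) (c : V → Fin k) (γ : Fin k) :
    Function.extend a r (Function.update c v γ) v = γ := by
  rw [Function.extend_apply' _ _ _ fun ⟨i, hi⟩ => G.irrefl (hi ▸ hW.adj_center i),
    Function.update_self]

theorem extend_update_apply_of_not_adj [DecidableEq V] (hW : G.IsFiveWheel v a) {k : ℕ}
    (r : Fin 5 → Fin k) (c : V → Fin k) (γ : Fin k) {x : V} (hxv : x ≠ v)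
    (hvx : ¬ G.Adj v x) : Function.extend a r (Function.update c v γ) x = c x := by
  rw [Function.extend_apply' _ _ _ fun ⟨i, hi⟩ => hvx (hi ▸ hW.adj_center i),
    Function.update_of_ne hxv]

theorem isCliqueColoring_extend [DecidableEq V] (hW : G.IsFiveWheel v a) (hclaw : G.ClawFree)
    {k : ℕ} {c : V → Fin k}
    (hc : ∀ s, G.IsMaxClique s → v ∉ s → s.Nontrivial → ∃ x ∈ s, ∃ y ∈ s, c x ≠ c y)
    {r : Fin 5 → Fin k} {γ : Fin k}
    (hA : ∀ i w₁ w₂, G.IsRimWitness v a (i + 4) w₁ → G.IsRimWitness v a i w₂ →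
      c w₁ = c w₂ → r i ≠ c w₁)
    (hB : ∀ i w, G.IsRimWitness v a i w → r i = c w → r (i + 1) ≠ c w)
    (hC : ∀ i, r i = γ → r (i + 1) ≠ γ) :
    G.IsCliqueColoring (Function.extend a r (Function.update c v γ)) := by
  have hc'a : ∀ i, Function.extend a r (Function.update c v γ) (a i) = r i :=
    hW.injective.extend_apply r _
  have hc'v := hW.extend_update_apply_center r c γ
  have hc'out := fun x => hW.extend_update_apply_of_not_adj r c γ (x := x)
  set c' := Function.extend a r (Function.update c v γ)
  intro s hs hnt
  by_contra! hmono
  by_cases hvs : v ∈ s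
  · obtain ⟨k, hk, hk'⟩ := hW.exists_add_one_mem_of_center_mem hs hvs hnt
    exact hC k (by rw [← hc'a, hmono _ hk _ hvs, hc'v])
      (by rw [← hc'a, hmono _ hk' _ hvs, hc'v])
  by_cases hrim : ∃ i, a i ∈ s
  · obtain ⟨i, hi⟩ := hrim
    by_cases huniq : ∀ j, a j ∈ s → j = i
    · obtain ⟨⟨w₁, hw₁s, hw₁⟩, w₂, hw₂s, hw₂⟩ :=
        hW.exists_isRimWitness_of_forall_mem_eq hclaw hs hvs hi huniq
      have e₁ : c w₁ = r i := by rw [← hc'out w₁ hw₁.1 hw₁.2.1, ← hc'a, hmono _ hw₁s _ hi]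
      have e₂ : c w₂ = r i := by rw [← hc'out w₂ hw₂.1 hw₂.2.1, ← hc'a, hmono _ hw₂s _ hi]
      exact hA i w₁ w₂ hw₁ hw₂ (e₁.trans e₂.symm) e₁.symm
    · push Not at huniq
      obtain ⟨j, hj, hji⟩ := huniq
      obtain ⟨k, hk, hk'⟩ := hW.exists_add_one_mem hs.1 hi hj hji.symm
      obtain ⟨w, hws, hw⟩ := hW.exists_isRimWitness_of_add_one_mem hs hvs hk hk'
      have e : ∀ x ∈ s, c' x = c w := fun x hx => by
        rw [hmono x hx w hws, hc'out w hw.1 hw.2.1]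
      exact hB k w hw (by rw [← hc'a, e _ hk]) (by rw [← hc'a, e _ hk'])
  · push Not at hrim
    have e : ∀ x ∈ s, c' x = c x := fun x hx => by
      refine hc'out x (fun h => hvs (h ▸ hx)) fun h => ?_
      obtain ⟨i, rfl⟩ := (hW.adj_iff_mem_range x).1 h
      exact hrim i hx
    obtain ⟨x, hx, y, hy, hxy⟩ := hc s hs hvs hnt
    exact hxy (by rw [← e x hx, ← e y hy, hmono x hx y hy])

theorem cliqueColorable_two (hW : G.IsFiveWheel v a) (hclaw : G.ClawFree)
    (h4 : G.CliqueFree 4) {c : V → Fin 2}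
    (hc : ∀ s, G.IsMaxClique s → v ∉ s → s.Nontrivial → ∃ x ∈ s, ∃ y ∈ s, c x ≠ c y) :
    G.CliqueColorable 2 := by
  classical
  obtain ⟨r, γ, hA, hB, hC⟩ := exists_rim_coloring (G.rimWitnessColor v a c)
  have hβ {i : Fin 5} {w : V} (h : G.IsRimWitness v a i w) :=
    hW.rimWitnessColor_eq hclaw h4 c h
  refine ⟨_, hW.isCliqueColoring_extend hclaw hc (r := r) ?_ ?_ hC⟩
  · intro i w₁ w₂ h₁ h₂ he hr
    exact hA i (by rw [hβ h₁, hβ h₂, he]) (by rw [hβ h₂, ← he, hr])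
  · intro i w h hr
    rw [← hr]
    exact hB i (by rw [hβ h, hr])

end IsFiveWheel

end SimpleGraph

theorem delete_degree_five_vertex_two_clique_colorable_general {V : Type*} [Fintype V]
    (G : SimpleGraph V) [DecidableRel G.Adj]
    (hclaw : G.ClawFree)
    (h4 : G.CliqueFree 4)
    (v : V) (hv : G.degree v = 5)
    (h : (G.induce {u : V | u ≠ v}).CliqueColorable 2) :
    G.CliqueColorable 2 := by
  obtain ⟨a, hW⟩ := exists_isFiveWheel hclaw h4 hv
  obtain ⟨c, hc⟩ := exists_forall_isMaxClique_of_cliqueColorable_induce h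
  refine hW.cliqueColorable_two hclaw h4 fun s hs hvs => hc s hs ?_
  rintro x hx (rfl : x = v)
  exact hvs hx

/-- For a claw-free, `K₅`-minor-free graph without 4-cliques and a vertex `v`
of degree 5: if `G - v` is 2-clique-colorable then so is `G`. -/
theorem delete_degree_five_vertex_two_clique_colorable {V : Type*} [Fintype V] [DecidableEq V]
    (G : SimpleGraph V) [DecidableRel G.Adj]
    (hclaw : G.ClawFree) (hK5 : ¬ G.HasMinor (⊤ : SimpleGraph (Fin 5)))
    (h4 : G.CliqueFree 4)
    (v : V) (hv : G.degree v = 5)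
    (h : (G.induce {u : V | u ≠ v}).CliqueColorable 2) :
    G.CliqueColorable 2 :=
  delete_degree_five_vertex_two_clique_colorable_general G hclaw h4 v hv h
end
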